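/- Let K > 0. Then there exists a constant C > 0 depending only on K such that the following holds: for every r ≥ 1, every E > 0 and every continuously differentiable function f : ℝ² → ℝ satisfying 0 ≤ f(z) ≤ 1 for all z, |∇f(z)| ≤ K √r for all z, and r ∫_{ℝ²} (1 − f) ≤ E, every connected component of the open set {z ∈ ℝ² : f(z) < 1/2} has diameter at most C · E / √r. -/

import Mathlib

/-! Let `L = K√r`, a Lipschitz constant for `f`, and `ρ = 1/(4L)`. Given `p, q` in the component,
the continuous function `dist p ·` takes every value in `[0, |pq|]` on it, so the component contains
points `z₀, …, zₙ` with `|p zᵢ| = 2ρi` and `n + 1 > |pq| / (2ρ)`. The balls `B(zᵢ, ρ)` are pairwise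
disjoint and `1 - f ≥ 1/4` on each of them, whence
`E ≥ r ∫ (1 - f) ≥ r (n + 1) |B(0, ρ)| / 4 > r |pq| ρ |B(0, 1)| / 8 = √r |pq| |B(0, 1)| / (32K)`.
-/

open MeasureTheory Metric Function
open scoped NNReal ENNReal

theorem norm_gradient {F : Type*} [NormedAddCommGroup F] [InnerProductSpace ℝ F] [CompleteSpace F]
    (f : F → ℝ) (x : F) : ‖gradient f x‖ = ‖fderiv ℝ f x‖ :=
  (InnerProductSpace.toDual ℝ F).symm.norm_map _

theorem lipschitzWith_of_norm_gradient_le {F : Type*} [NormedAddCommGroup F]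
    [InnerProductSpace ℝ F] [CompleteSpace F] {f : F → ℝ} {C : ℝ≥0} (hf : Differentiable ℝ f)
    (bound : ∀ x, ‖gradient f x‖ ≤ C) : LipschitzWith C f :=
  lipschitzWith_of_nnnorm_fderiv_le hf fun x => by
    rw [← NNReal.coe_le_coe, coe_nnnorm, ← norm_gradient]
    exact bound x

section Packing

variable {X : Type*} [PseudoMetricSpace X] {S : Set X} {p q : X}

theorem IsPreconnected.exists_mem_dist_eq (hS : IsPreconnected S) (hp : p ∈ S) (hq : q ∈ S)
    {t : ℝ} (ht : t ∈ Set.Icc 0 (dist p q)) : ∃ w ∈ S, dist p w = t :=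
  (hS.image _ (continuous_const.dist continuous_id).continuousOn).Icc_subset
    ⟨p, hp, dist_self p⟩ ⟨q, hq, rfl⟩ ht

theorem IsPreconnected.exists_pairwise_disjoint_balls (hS : IsPreconnected S) (hp : p ∈ S)
    (hq : q ∈ S) {ρ : ℝ} (hρ : 0 < ρ) :
    ∃ n : ℕ, dist p q < 2 * ρ * (n + 1) ∧ ∃ z : Fin (n + 1) → X,
      (∀ i, z i ∈ S) ∧ Pairwise (Disjoint on fun i => ball (z i) ρ) := by
  set n := ⌊dist p q / (2 * ρ)⌋₊
  have hn : dist p q < 2 * ρ * (n + 1) := by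
    rw [← div_lt_iff₀' (by positivity)]
    exact Nat.lt_floor_add_one _
  have hradius : ∀ i : Fin (n + 1), 2 * ρ * i ∈ Set.Icc 0 (dist p q) := by
    refine fun i => ⟨by positivity, ?_⟩
    rw [← le_div_iff₀' (by positivity)]
    exact (Nat.cast_le.2 (Nat.lt_succ_iff.1 i.isLt)).trans (Nat.floor_le (by positivity))
  choose z hzS hzd using fun i => hS.exists_mem_dist_eq hp hq (hradius i)
  refine ⟨n, hn, z, hzS, fun i j hij => ball_disjoint_ball ?_⟩
  -- the centres lie on distinct spheres about `p` whose radii differ by at least `2ρ`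
  rcases hij.lt_or_gt with hlt | hlt
  · have hij' : (i : ℝ) + 1 ≤ j := by exact_mod_cast hlt
    have := dist_triangle p (z i) (z j)
    rw [hzd, hzd] at this
    nlinarith [dist_comm (z i) (z j)]
  · have hji' : (j : ℝ) + 1 ≤ i := by exact_mod_cast hlt
    have := dist_triangle p (z j) (z i)
    rw [hzd, hzd] at this
    nlinarith [dist_comm (z i) (z j)]

end Packing

theorem mul_sum_measure_le_lintegral {α ι : Type*} [MeasurableSpace α] [Fintype ι]
    (μ : Measure α) {s : ι → Set α} (hd : Pairwise (Disjoint on s))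
    (hs : ∀ i, MeasurableSet (s i)) {g : α → ℝ≥0∞} {c : ℝ≥0∞} (hg : ∀ i, ∀ x ∈ s i, c ≤ g x) :
    c * ∑ i, μ (s i) ≤ ∫⁻ x, g x ∂μ := by
  have hunion : ∑ i, μ (s i) = μ (⋃ i, s i) := by rw [measure_iUnion hd hs, tsum_fintype]
  rw [hunion, ← lintegral_indicator_const (.iUnion hs)]
  refine lintegral_mono fun x => Set.indicator_apply_le' (fun hx => ?_) fun _ => zero_le
  obtain ⟨i, hi⟩ := Set.mem_iUnion.1 hx
  exact hg i x hi

theorem LipschitzWith.ofReal_dist_mul_measure_ball_le_lintegral {E : Type*} [NormedAddCommGroup E]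
    [MeasurableSpace E] [BorelSpace E] (μ : Measure E) [μ.IsAddHaarMeasure] {f : E → ℝ}
    {L : ℝ≥0} (hL : 0 < L) (hf : LipschitzWith L f) {S : Set E} (hS : IsPreconnected S)
    (hSf : S ⊆ {z | f z < 1 / 2}) {p q : E} (hp : p ∈ S) (hq : q ∈ S) :
    ENNReal.ofReal (dist p q) * μ (ball 0 (4 * (L : ℝ))⁻¹) ≤
      ENNReal.ofReal (2 / L) * ∫⁻ z, ENNReal.ofReal (1 - f z) ∂μ := by
  set ρ : ℝ := (4 * L)⁻¹ with hρ
  have hL' : (0 : ℝ) < L := hL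
  obtain ⟨n, hn, z, hzS, hdisj⟩ := hS.exists_pairwise_disjoint_balls hp hq (by positivity : 0 < ρ)
  have hquarter : ∀ i, ∀ w ∈ ball (z i) ρ, ENNReal.ofReal (1 / 4) ≤ ENNReal.ofReal (1 - f w) := by
    refine fun i w hw => ENNReal.ofReal_le_ofReal ?_
    have hLρ : (L : ℝ) * ρ = 1 / 4 := by rw [hρ]; field_simp
    have hclose : f w - f (z i) ≤ L * ρ := (abs_le.1 ((hf.dist_le_mul w (z i)).trans
      (mul_le_mul_of_nonneg_left (mem_ball.1 hw).le L.2))).2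
    have hzi : f (z i) < 1 / 2 := hSf (hzS i)
    linarith
  have hmass := mul_sum_measure_le_lintegral μ hdisj (fun _ => measurableSet_ball) hquarter
  simp only [Measure.addHaar_ball_center, Finset.sum_const, Finset.card_univ, Fintype.card_fin,
    nsmul_eq_mul] at hmass
  calc ENNReal.ofReal (dist p q) * μ (ball 0 ρ)
      ≤ ENNReal.ofReal (2 * ρ * (n + 1)) * μ (ball 0 ρ) := by gcongr
    _ = ENNReal.ofReal (2 / L) * (ENNReal.ofReal (1 / 4) * ((n + 1 : ℕ) * μ (ball 0 ρ))) := by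
      rw [← mul_assoc, ← mul_assoc, ← ENNReal.ofReal_mul (by positivity), ← ENNReal.ofReal_natCast,
        ← ENNReal.ofReal_mul (by positivity)]
      congr 2
      push_cast
      rw [hρ]
      field_simp
    _ ≤ ENNReal.ofReal (2 / L) * ∫⁻ z, ENNReal.ofReal (1 - f z) ∂μ := by gcongr

theorem diam_of_sublevel_component (K : ℝ) (hK : 0 < K) :
    ∃ C : ℝ, 0 < C ∧
    ∀ (r E : ℝ), 1 ≤ r → 0 < E →
    ∀ f : EuclideanSpace ℝ (Fin 2) → ℝ, ContDiff ℝ 1 f →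
    (∀ z, 0 ≤ f z ∧ f z ≤ 1) →
    (∀ z, ‖gradient f z‖ ≤ K * Real.sqrt r) →
    ENNReal.ofReal r * (∫⁻ z, ENNReal.ofReal (1 - f z)) ≤ ENNReal.ofReal E →
    ∀ z₀ : EuclideanSpace ℝ (Fin 2), f z₀ < 1 / 2 →
      EMetric.diam (connectedComponentIn {z : EuclideanSpace ℝ (Fin 2) | f z < 1 / 2} z₀)
        ≤ ENNReal.ofReal (C * E / Real.sqrt r) := by
  obtain ⟨v, hv, hV⟩ : ∃ v : ℝ, 0 < v ∧
      volume (ball (0 : EuclideanSpace ℝ (Fin 2)) 1) = ENNReal.ofReal v :=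
    ⟨_, ENNReal.toReal_pos (measure_ball_pos _ _ one_pos).ne' measure_ball_lt_top.ne,
      (ENNReal.ofReal_toReal measure_ball_lt_top.ne).symm⟩
  refine ⟨32 * K / v, by positivity, fun r E hr hE f hf _ hgrad hmass z₀ _ => ?_⟩
  have hs : 0 < √r := Real.sqrt_pos.2 (by linarith)
  set L : ℝ≥0 := ⟨K * √r, by positivity⟩
  have hL : (0 : ℝ) < L := mul_pos hK hs
  have hLip : LipschitzWith L f :=
    lipschitzWith_of_norm_gradient_le (hf.differentiable one_ne_zero) hgrad
  have hI : ∫⁻ z, ENNReal.ofReal (1 - f z) ≤ ENNReal.ofReal (E / r) := by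
    rw [ENNReal.ofReal_div_of_pos (by linarith), ENNReal.le_div_iff_mul_le
      (.inl (ENNReal.ofReal_pos.2 (by linarith)).ne') (.inl ENNReal.ofReal_ne_top), mul_comm]
    exact hmass
  refine Metric.ediam_le fun p hp q hq => ?_
  have hball := hLip.ofReal_dist_mul_measure_ball_le_lintegral volume hL
    isPreconnected_connectedComponentIn (connectedComponentIn_subset _ _) hp hq
  rw [Measure.addHaar_ball _ _ (by positivity), finrank_euclideanSpace_fin, hV] at hball
  have hdist : _ ≤ ENNReal.ofReal (2 / L) * ENNReal.ofReal (E / r) := hball.trans (by gcongr)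
  rw [← ENNReal.ofReal_mul (by positivity), ← ENNReal.ofReal_mul (by positivity),
    ← ENNReal.ofReal_mul (by positivity), ENNReal.ofReal_le_ofReal_iff (by positivity)] at hdist
  rw [edist_dist]
  refine ENNReal.ofReal_le_ofReal ?_
  have hL_def : (L : ℝ) = K * √r := rfl
  calc
    dist p q = dist p q * ((4 * (L : ℝ))⁻¹ ^ 2 * v) * (16 * L ^ 2 / v) := by
      field_simp
      norm_num
    _ ≤ 2 / L * (E / r) * (16 * L ^ 2 / v) := mul_le_mul_of_nonneg_right hdist (by positivity)
    _ = 32 * K / v * E / √r := by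
      rw [hL_def]
      field_simp
      rw [Real.sq_sqrt (by linarith)]
      ring
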